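/- Let p be a prime and s, n positive integers with n ≤ s. Define M(s,n) as the gcd of all multinomial coefficients C(s; λ_1,...,λ_n) over compositions (λ_1,...,λ_n) of s into n positive parts. Then the p-adic valuation of M(s,n) equals 0 if n ≤ digits_p(s), and equals ⌈(n - digits_p(s))/(p-1)⌉ if n > digits_p(s). -/

import Mathlib

/-- The sum of the digits of `n` in base `p`. -/
def digitSum (p n : ℕ) : ℕ := (Nat.digits p n).sum

/-- `Msn s n` is the gcd of the multinomial coefficients `C(s; λ₁,…,λₙ)` over all
compositions `(λ₁,…,λₙ)` of `s` into `n` positive parts. -/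
def Msn (s n : ℕ) : ℕ :=
  (((Finset.Nat.antidiagonalTuple n s).filter (fun f => ∀ i, 0 < f i)).gcd
    (fun f => Nat.multinomial Finset.univ f))

/-!
Write `S` for the base-`p` digit sum. By Legendre's formula
`(p - 1) · v_p(C(s; λ₁,…,λₙ)) = S(λ₁) + ⋯ + S(λₙ) - S(s)`, and `S(λᵢ) ≥ 1` for positive parts,
so `n ≤ S(s) + (p - 1) v` for every composition. Conversely, replacing a summand `p^(e+1)` by
`p` copies of `p^e` adds `p - 1` summands, so starting from the digit expansion, `s` is a sum of
exactly `S(s) + (p - 1) k` powers of `p` as long as this number is at most `s`. Grouping these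
powers into `n` parts yields a composition whose digit sums total at most that many, since `S`
is subadditive.
-/

open Nat Finset

variable {p : ℕ}

lemma digitSum_pos {m : ℕ} (hm : m ≠ 0) : 0 < digitSum p m :=
  List.sum_pos_iff_exists_pos_nat.mpr ⟨_, List.getLast_mem (digits_ne_nil_iff_ne_zero.mpr hm),
    Nat.pos_of_ne_zero (getLast_digit_ne_zero p hm)⟩

lemma digitSum_pow (hp : 1 < p) (e : ℕ) : digitSum p (p ^ e) = 1 := by
  simpa [digitSum, digits_of_lt p 1 one_ne_zero hp] using
    congrArg List.sum (digits_base_pow_mul hp one_pos (k := e))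

lemma card_le_sum_digitSum {n : ℕ} {f : Fin n → ℕ} (hf : ∀ i, 0 < f i) :
    n ≤ ∑ i, digitSum p (f i) := by
  calc n = ∑ _i : Fin n, 1 := by simp
    _ ≤ ∑ i, digitSum p (f i) := sum_le_sum fun i _ => digitSum_pos (hf i).ne'

lemma exists_list_pow_sum_eq_ofDigits (ds : List ℕ) :
    ∃ l : List ℕ, (l.map (p ^ ·)).sum = ofDigits p ds ∧ l.length = ds.sum := by
  induction ds with
  | nil => exact ⟨[], by simp, rfl⟩
  | cons d ds ih =>
    obtain ⟨l, hsum, hlen⟩ := ih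
    refine ⟨List.replicate d 0 ++ l.map (· + 1), ?_, by simp [hlen]⟩
    have hshift : (l.map fun e => p ^ (e + 1)).sum = p * (l.map (p ^ ·)).sum := by
      simp [pow_succ', List.sum_map_mul_left]
    simpa [ofDigits_cons, ← hsum, Function.comp_def] using hshift

lemma exists_list_pow_sum_eq_of_length_lt (hp : 0 < p) {l : List ℕ}
    (hl : l.length < (l.map (p ^ ·)).sum) :
    ∃ l' : List ℕ, (l'.map (p ^ ·)).sum = (l.map (p ^ ·)).sum ∧
      l'.length = l.length + (p - 1) := by
  obtain ⟨e, he, he0⟩ : ∃ e ∈ l, e ≠ 0 := by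
    by_contra! h
    rw [List.eq_replicate_iff.mpr ⟨rfl, h⟩] at hl
    simp at hl
  obtain ⟨e, rfl⟩ := Nat.exists_eq_succ_of_ne_zero he0
  refine ⟨List.replicate p e ++ l.erase (e + 1), ?_, ?_⟩
  · rw [((List.perm_cons_erase he).map _).sum_eq]
    simp [pow_succ']
  · have := List.length_pos_of_mem he
    simp only [List.length_append, List.length_replicate, List.length_erase_of_mem he]
    omega

lemma exists_list_pow_sum_eq (hp : 1 < p) {s t : ℕ} (h : digitSum p s + (p - 1) * t ≤ s) :
    ∃ l : List ℕ, (l.map (p ^ ·)).sum = s ∧ l.length = digitSum p s + (p - 1) * t := by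
  induction t with
  | zero =>
    simpa [digitSum, ofDigits_digits] using exists_list_pow_sum_eq_ofDigits (p := p) (digits p s)
  | succ t ih =>
    rw [Nat.mul_add_one] at h
    obtain ⟨l, hsum, hlen⟩ := ih (by omega)
    obtain ⟨l', hsum', hlen'⟩ :=
      exists_list_pow_sum_eq_of_length_lt (p := p) (by omega) (l := l) (by omega)
    exact ⟨l', hsum'.trans hsum, by rw [hlen', hlen, Nat.mul_add_one, add_assoc]⟩

lemma natCeil_sub_div_le_iff {a b c j : ℕ} (hc : 0 < c) :
    ⌈((a : ℚ) - b) / c⌉₊ ≤ j ↔ a ≤ b + c * j := by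
  rw [Nat.ceil_le, div_le_iff₀ (by exact_mod_cast hc), sub_le_iff_le_add, mul_comm, add_comm]
  norm_cast

def compositions (n s : ℕ) : Finset (Fin n → ℕ) :=
  (Finset.Nat.antidiagonalTuple n s).filter fun f => ∀ i, 0 < f i

lemma mem_compositions {n s : ℕ} {f : Fin n → ℕ} :
    f ∈ compositions n s ↔ ∑ i, f i = s ∧ ∀ i, 0 < f i := by
  rw [compositions, mem_filter, Finset.Nat.mem_antidiagonalTuple]

lemma Msn_eq_gcd (s n : ℕ) : Msn s n = (compositions n s).gcd (multinomial univ) := rfl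

section PrimeBase

variable [hp : Fact p.Prime]

lemma sub_one_mul_padicValNat_factorial_add_digitSum (m : ℕ) :
    (p - 1) * padicValNat p m ! + digitSum p m = m := by
  rw [sub_one_mul_padicValNat_factorial]
  exact Nat.sub_add_cancel (digit_sum_le p m)

lemma padicValNat_finset_prod {ι : Type*} {t : Finset ι} {g : ι → ℕ} (hg : ∀ i ∈ t, g i ≠ 0) :
    padicValNat p (∏ i ∈ t, g i) = ∑ i ∈ t, padicValNat p (g i) := by
  simp only [← factorization_def _ hp.out, factorization_prod hg, Finsupp.coe_finsetSum,
    Finset.sum_apply]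

lemma sub_one_mul_padicValNat_multinomial_add_digitSum {ι : Type*} (t : Finset ι) (f : ι → ℕ) :
    (p - 1) * padicValNat p (multinomial t f) + digitSum p (∑ i ∈ t, f i) =
      ∑ i ∈ t, digitSum p (f i) := by
  have hval : ∑ i ∈ t, padicValNat p (f i)! + padicValNat p (multinomial t f) =
      padicValNat p (∑ i ∈ t, f i)! := by
    rw [← multinomial_spec, padicValNat.mul (prod_ne_zero_iff.mpr fun i _ => factorial_ne_zero _)
      (multinomial_pos t f).ne', padicValNat_finset_prod fun i _ => factorial_ne_zero _]
  have hparts : ∑ i ∈ t, ((p - 1) * padicValNat p (f i)! + digitSum p (f i)) = ∑ i ∈ t, f i :=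
    sum_congr rfl fun i _ => sub_one_mul_padicValNat_factorial_add_digitSum (f i)
  have hwhole := sub_one_mul_padicValNat_factorial_add_digitSum (p := p) (∑ i ∈ t, f i)
  rw [sum_add_distrib, ← mul_sum] at hparts
  rw [← hval, mul_add] at hwhole
  omega

lemma digitSum_sum_le {ι : Type*} (t : Finset ι) (f : ι → ℕ) :
    digitSum p (∑ i ∈ t, f i) ≤ ∑ i ∈ t, digitSum p (f i) := by
  have := sub_one_mul_padicValNat_multinomial_add_digitSum (p := p) t f
  omega

lemma exists_mem_compositions_sum_digitSum_le {N n : ℕ} (hn : 0 < n) (hnN : n ≤ N)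
    {v : Fin N → ℕ} (hv : ∀ i, 0 < v i) :
    ∃ f ∈ compositions n (∑ i, v i), ∑ j, digitSum p (f j) ≤ ∑ i, digitSum p (v i) := by
  let σ : Fin N → Fin n := fun i => ⟨min i (n - 1), by omega⟩
  refine ⟨fun j => ∑ i with σ i = j, v i,
    mem_compositions.mpr ⟨sum_fiberwise _ σ v, fun j => ?_⟩, ?_⟩
  · exact sum_pos (fun i _ => hv i) ⟨⟨j, by omega⟩, by simp [σ, Fin.ext_iff]; omega⟩
  · calc ∑ j, digitSum p (∑ i with σ i = j, v i)
        ≤ ∑ j, ∑ i with σ i = j, digitSum p (v i) := sum_le_sum fun j _ => digitSum_sum_le _ _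
      _ = ∑ i, digitSum p (v i) := sum_fiberwise _ σ _

lemma le_digitSum_add_sub_one_mul_padicValNat_multinomial {n s : ℕ} {f : Fin n → ℕ}
    (hf : f ∈ compositions n s) :
    n ≤ digitSum p s + (p - 1) * padicValNat p (multinomial univ f) := by
  obtain ⟨hsum, hpos⟩ := mem_compositions.mp hf
  have := sub_one_mul_padicValNat_multinomial_add_digitSum (p := p) univ f
  have := card_le_sum_digitSum (p := p) hpos
  rw [hsum] at *
  omega

lemma exists_mem_compositions_padicValNat_multinomial_le {n s k : ℕ} (hn : 0 < n)
    (hnk : n ≤ digitSum p s + (p - 1) * k) (hks : digitSum p s + (p - 1) * k ≤ s) :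
    ∃ f ∈ compositions n s, padicValNat p (multinomial univ f) ≤ k := by
  obtain ⟨l, hsum, hlen⟩ := exists_list_pow_sum_eq hp.out.one_lt hks
  obtain ⟨f, hf, hfS⟩ := exists_mem_compositions_sum_digitSum_le (p := p) hn (hlen ▸ hnk)
    (v := fun i : Fin l.length => p ^ l[i.1]) fun i => pow_pos hp.out.pos _
  have hv : ∑ i : Fin l.length, p ^ l[i.1] = s := (Fin.sum_univ_fun_getElem l (p ^ ·)).trans hsum
  simp only [hv, digitSum_pow hp.out.one_lt, sum_const, Finset.card_fin, smul_eq_mul,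
    mul_one] at hf hfS
  refine ⟨f, hf, Nat.le_of_mul_le_mul_left ?_ (Nat.sub_pos_of_lt hp.out.one_lt)⟩
  have := sub_one_mul_padicValNat_multinomial_add_digitSum (p := p) univ f
  rw [(mem_compositions.mp hf).1] at this
  omega

theorem padicValNat_Msn_eq_natCeil {n s : ℕ} (hn : 0 < n) (hns : n ≤ s) :
    padicValNat p (Msn s n) = ⌈((n : ℚ) - digitSum p s) / ((p : ℚ) - 1)⌉₊ := by
  have hk : ∀ j : ℕ, ⌈((n : ℚ) - digitSum p s) / ((p : ℚ) - 1)⌉₊ ≤ j ↔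
      n ≤ digitSum p s + (p - 1) * j := fun j => by
    rw [← Nat.cast_pred hp.out.pos]
    exact natCeil_sub_div_le_iff (Nat.sub_pos_of_lt hp.out.one_lt)
  set k := ⌈((n : ℚ) - digitSum p s) / ((p : ℚ) - 1)⌉₊
  have hs := sub_one_mul_padicValNat_factorial_add_digitSum (p := p) s
  have hks : k ≤ padicValNat p s ! := (hk _).2 (by omega)
  obtain ⟨f, hf, hfk⟩ := exists_mem_compositions_padicValNat_multinomial_le hn ((hk k).1 le_rfl)
    (by have := Nat.mul_le_mul_left (p - 1) hks; omega)
  rw [Msn_eq_gcd]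
  have hM : (compositions n s).gcd (multinomial univ) ≠ 0 :=
    gcd_eq_zero_iff.not.mpr fun h => (multinomial_pos _ _).ne' (h f hf)
  refine le_antisymm ?_ ?_
  · exact ((padicValNat_dvd_iff_le (multinomial_pos _ _).ne').1
      (pow_padicValNat_dvd.trans (gcd_dvd hf))).trans hfk
  · rw [← padicValNat_dvd_iff_le hM]
    exact dvd_gcd fun g hg => (padicValNat_dvd_iff_le (multinomial_pos _ _).ne').2
      ((hk _).2 (le_digitSum_add_sub_one_mul_padicValNat_multinomial hg))

end PrimeBase

theorem padicValNat_Msn_general (p s n : ℕ) (hp : Nat.Prime p) (hn : 0 < n)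
    (hns : n ≤ s) :
    (padicValNat p (Msn s n) : ℤ) =
      if n ≤ digitSum p s then 0
      else ⌈((n : ℚ) - (digitSum p s : ℚ)) / ((p : ℚ) - 1)⌉ := by
  have := Fact.mk hp
  have hp1 : 0 < p - 1 := Nat.sub_pos_of_lt hp.one_lt
  rw [padicValNat_Msn_eq_natCeil hn hns, ← Nat.cast_pred hp.pos]
  split_ifs with h
  · simpa using (natCeil_sub_div_le_iff (j := 0) hp1).2 (by simpa using h)
  · have hle : (digitSum p s : ℚ) ≤ n := by exact_mod_cast (by omega : digitSum p s ≤ n)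
    exact Int.natCast_ceil_eq_ceil (div_nonneg (sub_nonneg.mpr hle) (by positivity))

/-- The `p`-adic valuation of `M(s,n)` is `0` if `n ≤ digits_p(s)` and
`⌈(n - digits_p(s))/(p-1)⌉` if `n > digits_p(s)`. -/
theorem padicValNat_Msn (p s n : ℕ) (hp : Nat.Prime p) (hs : 0 < s) (hn : 0 < n)
    (hns : n ≤ s) :
    (padicValNat p (Msn s n) : ℤ) =
      if n ≤ digitSum p s then 0
      else ⌈((n : ℚ) - (digitSum p s : ℚ)) / ((p : ℚ) - 1)⌉ :=
  padicValNat_Msn_general p s n hp hn hns
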